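/- arXiv:1902.07453 — 5 statements merged into one kernel-verified Lean document; each statement's English description precedes it below -/
import Mathlib

section
/- Let L ≥ 1 and let u, q ∈ ℝ³ with |u| ≤ L. Then √(1+|q|²)·√(1+|u|²) − u·q ≥ |q|/(3L). -/
open scoped RealInnerProductSpace

theorem stmt_1 (L : ℝ) (hL : 1 ≤ L) (u q : EuclideanSpace ℝ (Fin 3)) (hu : ‖u‖ ≤ L) :
    Real.sqrt (1 + ‖q‖ ^ 2) * Real.sqrt (1 + ‖u‖ ^ 2) - ⟪u, q⟫ ≥ ‖q‖ / (3 * L) := by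
  have hCS : ⟪u, q⟫ ≤ ‖u‖ * ‖q‖ := real_inner_le_norm u q
  set a := ‖q‖ with ha
  set b := ‖u‖ with hb
  have ha0 : 0 ≤ a := norm_nonneg q
  have hb0 : 0 ≤ b := norm_nonneg u
  have hL0 : (0:ℝ) < L := by linarith
  have key : b * a + a / (3 * L) ≤ Real.sqrt (1 + a ^ 2) * Real.sqrt (1 + b ^ 2) := by
    rw [← Real.sqrt_mul (by positivity)]
    rw [Real.le_sqrt (by positivity) (by positivity)]
    have h1 : a / (3 * L) ≤ a / 3 := by
      apply div_le_div_of_nonneg_left ha0 (by norm_num) (by linarith)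
    have h2 : b * (a / (3 * L)) ≤ a / 3 := by
      rw [mul_div_assoc', div_le_div_iff₀ (by positivity) (by norm_num : (0:ℝ) < 3)]
      nlinarith
    have h3 : (a / (3 * L)) ^ 2 ≤ (a / 3) ^ 2 := by
      apply pow_le_pow_left₀ (by positivity) h1
    have h4 : a * (b * (a / (3 * L))) ≤ a * (a / 3) :=
      mul_le_mul_of_nonneg_left h2 ha0
    nlinarith [sq_nonneg (a - b), mul_nonneg ha0 hb0]
  linarith
end

section
/- Let f : ℝ³ → ℝ be nonnegative, integrable, and vanish for |q| ≥ 2R where R > 0. Define N⁰ = ∫ f(q) dq and Nⁱ = ∫ (qⁱ/√(1+|q|²)) f(q) dq for i = 1,2,3, and n = √((N⁰)² − |N|²) where N = (N¹,N²,N³). Then n ≥ (1/√(1+4R²)) ∫ f(q) dq. -/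
open MeasureTheory

lemma aux_mono (a b : ℝ) (ha : 0 ≤ a) (hab : a ≤ b) :
    a / Real.sqrt (1 + a ^ 2) ≤ b / Real.sqrt (1 + b ^ 2) := by
  have hb : 0 ≤ b := ha.trans hab
  have h1 : (0:ℝ) < Real.sqrt (1 + a ^ 2) := Real.sqrt_pos.2 (by positivity)
  have h2 : (0:ℝ) < Real.sqrt (1 + b ^ 2) := Real.sqrt_pos.2 (by positivity)
  rw [div_le_div_iff₀ h1 h2]
  have e1 : a * Real.sqrt (1 + b ^ 2) = Real.sqrt (a ^ 2 * (1 + b ^ 2)) := by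
    rw [Real.sqrt_mul (by positivity), Real.sqrt_sq ha]
  have e2 : b * Real.sqrt (1 + a ^ 2) = Real.sqrt (b ^ 2 * (1 + a ^ 2)) := by
    rw [Real.sqrt_mul (by positivity), Real.sqrt_sq hb]
  rw [e1, e2]
  apply Real.sqrt_le_sqrt
  nlinarith

theorem stmt_5 (R : ℝ) (hR : 0 < R) (f : EuclideanSpace ℝ (Fin 3) → ℝ)
    (hf_nonneg : ∀ q, 0 ≤ f q) (hf_int : Integrable f)
    (hf_supp : ∀ q : EuclideanSpace ℝ (Fin 3), 2 * R ≤ ‖q‖ → f q = 0) :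
    Real.sqrt ((∫ q, f q) ^ 2 -
        ∑ i : Fin 3, (∫ q : EuclideanSpace ℝ (Fin 3), (q i / Real.sqrt (1 + ‖q‖ ^ 2)) * f q) ^ 2)
      ≥ (1 / Real.sqrt (1 + 4 * R ^ 2)) * ∫ q, f q := by
  set s : ℝ := Real.sqrt (1 + 4 * R ^ 2) with hs
  have hs0 : 0 < s := Real.sqrt_pos.2 (by positivity)
  have hs2 : s ^ 2 = 1 + 4 * R ^ 2 := Real.sq_sqrt (by positivity)
  set I : ℝ := ∫ q, f q with hI
  have hI0 : 0 ≤ I := integral_nonneg hf_nonneg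
  set v : EuclideanSpace ℝ (Fin 3) → EuclideanSpace ℝ (Fin 3) :=
    fun q => (f q / Real.sqrt (1 + ‖q‖ ^ 2)) • q with hv
  have hnorm : ∀ q, ‖v q‖ ≤ (2 * R / s) * f q := by
    intro q
    have hsq : (0:ℝ) < Real.sqrt (1 + ‖q‖ ^ 2) := Real.sqrt_pos.2 (by positivity)
    have hvq : ‖v q‖ = f q * (‖q‖ / Real.sqrt (1 + ‖q‖ ^ 2)) := by
      rw [hv, norm_smul, Real.norm_eq_abs, abs_of_nonneg (div_nonneg (hf_nonneg q) hsq.le)]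
      ring
    rw [hvq]
    by_cases h : 2 * R ≤ ‖q‖
    · simp [hf_supp q h]
    · push_neg at h
      have := aux_mono ‖q‖ (2 * R) (norm_nonneg q) h.le
      have h2 : Real.sqrt (1 + (2 * R) ^ 2) = s := by rw [hs]; ring_nf
      rw [h2] at this
      calc f q * (‖q‖ / Real.sqrt (1 + ‖q‖ ^ 2)) ≤ f q * (2 * R / s) :=
            mul_le_mul_of_nonneg_left this (hf_nonneg q)
        _ = (2 * R / s) * f q := by ring
  have hvm : AEStronglyMeasurable v volume := by
    have hc : Continuous fun q : EuclideanSpace ℝ (Fin 3) => (Real.sqrt (1 + ‖q‖ ^ 2))⁻¹ := by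
      apply Continuous.inv₀
      · exact Real.continuous_sqrt.comp (by continuity)
      · exact fun q => ne_of_gt (Real.sqrt_pos.2 (by positivity))
    have : v = fun q => (f q * (Real.sqrt (1 + ‖q‖ ^ 2))⁻¹) • q := by
      funext q; simp only [hv, div_eq_mul_inv]
    rw [this]
    exact (hf_int.aestronglyMeasurable.mul hc.aestronglyMeasurable).smul aestronglyMeasurable_id
  have hvint : Integrable v := by
    refine (hf_int.const_mul (2 * R / s)).mono hvm (ae_of_all _ fun q => ?_)
    rw [Real.norm_eq_abs, abs_of_nonneg (mul_nonneg (by positivity) (hf_nonneg q))]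
    exact hnorm q
  set V : EuclideanSpace ℝ (Fin 3) := ∫ q, v q with hV
  have hcomp : ∀ i : Fin 3,
      (∫ q : EuclideanSpace ℝ (Fin 3), (q i / Real.sqrt (1 + ‖q‖ ^ 2)) * f q) = V i := by
    intro i
    have h := (EuclideanSpace.proj i : EuclideanSpace ℝ (Fin 3) →L[ℝ] ℝ).integral_comp_comm hvint
    rw [hV, show (∫ q, v q) i
        = (EuclideanSpace.proj i : EuclideanSpace ℝ (Fin 3) →L[ℝ] ℝ) (∫ q, v q) from rfl, ← h]
    congr 1
    funext q
    rw [show (EuclideanSpace.proj i : EuclideanSpace ℝ (Fin 3) →L[ℝ] ℝ) (v q) = v q i from rfl,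
      show v q i = (f q / Real.sqrt (1 + ‖q‖ ^ 2)) * q i from rfl]
    ring
  have hVnorm : ‖V‖ ≤ (2 * R / s) * I := by
    calc ‖V‖ ≤ ∫ q, ‖v q‖ := norm_integral_le_integral_norm v
      _ ≤ ∫ q, (2 * R / s) * f q := integral_mono hvint.norm (hf_int.const_mul _) hnorm
      _ = (2 * R / s) * I := by rw [MeasureTheory.integral_const_mul]
  have hsum : ∑ i : Fin 3, (∫ q : EuclideanSpace ℝ (Fin 3),
      (q i / Real.sqrt (1 + ‖q‖ ^ 2)) * f q) ^ 2 = ‖V‖ ^ 2 := by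
    rw [EuclideanSpace.norm_eq, Real.sq_sqrt (by positivity)]
    exact Finset.sum_congr rfl fun i _ => by rw [hcomp i, Real.norm_eq_abs, sq_abs]
  rw [hsum]
  have hkey : (I / s) ^ 2 ≤ I ^ 2 - ‖V‖ ^ 2 := by
    have hsne : s ≠ 0 := ne_of_gt hs0
    have h1 : ‖V‖ ^ 2 ≤ ((2 * R / s) * I) ^ 2 := pow_le_pow_left₀ (norm_nonneg V) hVnorm 2
    have h1' : ‖V‖ ^ 2 * s ^ 2 ≤ 4 * R ^ 2 * I ^ 2 := by
      have e : ((2 * R / s) * I) ^ 2 * s ^ 2 = 4 * R ^ 2 * I ^ 2 := by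
        field_simp; ring
      nlinarith [mul_le_mul_of_nonneg_right h1 (sq_nonneg s)]
    rw [div_pow, div_le_iff₀ (by positivity)]
    have e2 : I ^ 2 * s ^ 2 = I ^ 2 * (1 + 4 * R ^ 2) := by rw [hs2]
    nlinarith [h1', e2]
  calc (1 / s) * I = Real.sqrt ((I / s) ^ 2) := by
        rw [Real.sqrt_sq (by positivity)]; ring
    _ ≤ Real.sqrt (I ^ 2 - ‖V‖ ^ 2) := Real.sqrt_le_sqrt hkey
end

section
/- Let a ≥ 0 and g ≥ 0 be measurable on ℝ³ with ∫ g dq finite. If K := 1/∫_{ℝ³} e^{−√(1+|q|²)} dq, then (∫ g dq)·log(∫ g dq) ≤ ∫ g(q) log g(q) dq + ∫ (√(1+|q|²) + |log K|) g(q) dq. -/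
open MeasureTheory

lemma bregman_aux {x y : ℝ} (hx : 0 ≤ x) (hy : 0 < y) :
    x ≤ x * Real.log x - x * Real.log y + y := by
  rcases eq_or_lt_of_le hx with h | hx
  · simp [← h, hy.le]
  · have h1 : Real.log (y / x) ≤ y / x - 1 :=
      Real.log_le_sub_one_of_pos (div_pos hy hx)
    rw [Real.log_div hy.ne' hx.ne'] at h1
    have h2 : x * (Real.log y - Real.log x) ≤ x * (y / x - 1) :=
      mul_le_mul_of_nonneg_left h1 hx.le
    have h3 : x * (y / x - 1) = y - x := by field_simp
    nlinarith

lemma exp_neg_jap_integrable :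
    Integrable (fun q : EuclideanSpace ℝ (Fin 3) => Real.exp (-Real.sqrt (1 + ‖q‖ ^ 2))) := by
  have hdim : (Module.finrank ℝ (EuclideanSpace ℝ (Fin 3)) : ℝ) < 4 := by
    simp [finrank_euclideanSpace]; norm_num
  have hint : Integrable (fun q : EuclideanSpace ℝ (Fin 3) => (1 + ‖q‖) ^ (-(4:ℝ))) :=
    integrable_one_add_norm hdim
  refine (hint.const_mul 96).mono' ?_ (Filter.Eventually.of_forall fun q => ?_)
  · apply Measurable.aestronglyMeasurable; fun_prop
  · have hs0 : (0:ℝ) < 1 + ‖q‖ ^ 2 := by positivity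
    have hs : 0 < Real.sqrt (1 + ‖q‖ ^ 2) := Real.sqrt_pos.2 hs0
    set s := Real.sqrt (1 + ‖q‖ ^ 2) with hs_def
    have hlow : (1 + ‖q‖) ≤ Real.sqrt 2 * s := one_add_norm_le_sqrt_two_mul_sqrt q
    have hq1 : (0:ℝ) < 1 + ‖q‖ := by positivity
    have h4 : (1 + ‖q‖) ^ 4 ≤ (Real.sqrt 2 * s) ^ 4 :=
      pow_le_pow_left₀ hq1.le hlow 4
    have hsqrt2 : (Real.sqrt 2 * s) ^ 4 = 4 * s ^ 4 := by
      have h2' : Real.sqrt 2 ^ 2 = 2 := Real.sq_sqrt (by norm_num)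
      rw [mul_pow, show (4:ℕ) = 2 * 2 from rfl, pow_mul, h2']
      norm_num
    have hexp : s ^ 4 / 24 ≤ Real.exp s := by
      have h := Real.pow_div_factorial_le_exp s hs.le 4
      norm_num [Nat.factorial] at h
      linarith
    have hexp' : Real.exp (-s) ≤ 24 / s ^ 4 := by
      have h1 : (Real.exp s)⁻¹ ≤ (s ^ 4 / 24)⁻¹ := by
        apply inv_anti₀ (by positivity) hexp
      rw [Real.exp_neg]
      calc (Real.exp s)⁻¹ ≤ (s ^ 4 / 24)⁻¹ := h1
        _ = 24 / s ^ 4 := by field_simp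
    have hrw : (1 + ‖q‖) ^ (-(4:ℝ)) = ((1 + ‖q‖) ^ 4)⁻¹ := by
      rw [Real.rpow_neg hq1.le, ← Real.rpow_natCast (1 + ‖q‖) 4]
      norm_num
    rw [Real.norm_eq_abs, abs_of_pos (Real.exp_pos _), hrw]
    calc Real.exp (-s) ≤ 24 / s ^ 4 := hexp'
      _ ≤ 96 * ((1 + ‖q‖) ^ 4)⁻¹ := by
          rw [div_le_iff₀ (by positivity)]
          have h96 : (1 + ‖q‖) ^ 4 ≤ 4 * s ^ 4 := by linarith [h4, hsqrt2.le]
          have hinv : ((1 + ‖q‖) ^ 4)⁻¹ * (1 + ‖q‖) ^ 4 = 1 := by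
            field_simp
          nlinarith [pow_pos hq1 4, pow_pos hs 4,
            mul_pos (inv_pos.2 (pow_pos hq1 4)) (pow_pos hs 4)]

theorem stmt_12 (g : EuclideanSpace ℝ (Fin 3) → ℝ)
    (hg_nonneg : ∀ q, 0 ≤ g q) (hg_meas : Measurable g) (hg_int : Integrable g)
    (hg_ent : Integrable (fun q => g q * Real.log (g q)))
    (hg_mom : Integrable (fun q : EuclideanSpace ℝ (Fin 3) => Real.sqrt (1 + ‖q‖ ^ 2) * g q))
    (K : ℝ)
    (hK : K = 1 / ∫ q : EuclideanSpace ℝ (Fin 3), Real.exp (-Real.sqrt (1 + ‖q‖ ^ 2))) :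
    (∫ q, g q) * Real.log (∫ q, g q)
      ≤ (∫ q, g q * Real.log (g q))
        + ∫ q : EuclideanSpace ℝ (Fin 3), (Real.sqrt (1 + ‖q‖ ^ 2) + |Real.log K|) * g q := by
  set Z : ℝ := ∫ q : EuclideanSpace ℝ (Fin 3), Real.exp (-Real.sqrt (1 + ‖q‖ ^ 2)) with hZ_def
  have hZint := exp_neg_jap_integrable
  have hZpos : 0 < Z := by
    rw [hZ_def, integral_pos_iff_support_of_nonneg (fun q => (Real.exp_pos _).le) hZint]
    have hsupp : Function.support (fun q : EuclideanSpace ℝ (Fin 3) =>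
        Real.exp (-Real.sqrt (1 + ‖q‖ ^ 2))) = Set.univ := by
      ext q; simp [(Real.exp_pos _).ne']
    rw [hsupp]
    exact isOpen_univ.measure_pos volume Set.univ_nonempty
  -- split RHS last integral
  have hsplit : (∫ q : EuclideanSpace ℝ (Fin 3),
        (Real.sqrt (1 + ‖q‖ ^ 2) + |Real.log K|) * g q)
      = (∫ q : EuclideanSpace ℝ (Fin 3), Real.sqrt (1 + ‖q‖ ^ 2) * g q)
        + |Real.log K| * ∫ q, g q := by
    rw [← integral_const_mul]
    rw [← integral_add hg_mom (hg_int.const_mul _)]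
    congr 1; funext q; ring
  set M : ℝ := ∫ q, g q with hM_def
  have hM0 : 0 ≤ M := integral_nonneg hg_nonneg
  rcases eq_or_lt_of_le hM0 with hM | hM
  · -- M = 0 : g = 0 a.e.
    have hg0 : g =ᵐ[volume] 0 := by
      rw [← integral_eq_zero_iff_of_nonneg hg_nonneg hg_int]
      exact hM.symm
    have h1 : (∫ q, g q * Real.log (g q)) = 0 :=
      integral_eq_zero_of_ae (by filter_upwards [hg0] with q hq; simp [hq])
    have h2 : (∫ q : EuclideanSpace ℝ (Fin 3),
        (Real.sqrt (1 + ‖q‖ ^ 2) + |Real.log K|) * g q) = 0 :=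
      integral_eq_zero_of_ae (by filter_upwards [hg0] with q hq; simp [hq])
    rw [← hM, h1, h2]
    simp
  · -- M > 0
    set c : ℝ := M / Z with hc_def
    have hc : 0 < c := div_pos hM hZpos
    have hRHSint : Integrable (fun q : EuclideanSpace ℝ (Fin 3) =>
        g q * Real.log (g q) - g q * Real.log c + Real.sqrt (1 + ‖q‖ ^ 2) * g q
          + c * Real.exp (-Real.sqrt (1 + ‖q‖ ^ 2))) :=
      ((hg_ent.sub (hg_int.mul_const _)).add hg_mom).add (hZint.const_mul c)
    have hpt : ∀ q : EuclideanSpace ℝ (Fin 3), g q ≤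
        g q * Real.log (g q) - g q * Real.log c + Real.sqrt (1 + ‖q‖ ^ 2) * g q
          + c * Real.exp (-Real.sqrt (1 + ‖q‖ ^ 2)) := by
      intro q
      have hy : 0 < c * Real.exp (-Real.sqrt (1 + ‖q‖ ^ 2)) :=
        mul_pos hc (Real.exp_pos _)
      have := bregman_aux (hg_nonneg q) hy
      have hlog : Real.log (c * Real.exp (-Real.sqrt (1 + ‖q‖ ^ 2)))
          = Real.log c - Real.sqrt (1 + ‖q‖ ^ 2) := by
        rw [Real.log_mul hc.ne' (Real.exp_pos _).ne', Real.log_exp]; ring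
      rw [hlog] at this
      nlinarith [this]
    have hmono : M ≤ ∫ q : EuclideanSpace ℝ (Fin 3),
        (g q * Real.log (g q) - g q * Real.log c + Real.sqrt (1 + ‖q‖ ^ 2) * g q
          + c * Real.exp (-Real.sqrt (1 + ‖q‖ ^ 2))) :=
      integral_mono hg_int hRHSint hpt
    have hcomp : (∫ q : EuclideanSpace ℝ (Fin 3),
        (g q * Real.log (g q) - g q * Real.log c + Real.sqrt (1 + ‖q‖ ^ 2) * g q
          + c * Real.exp (-Real.sqrt (1 + ‖q‖ ^ 2))))
        = (∫ q, g q * Real.log (g q)) - M * Real.log c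
          + (∫ q : EuclideanSpace ℝ (Fin 3), Real.sqrt (1 + ‖q‖ ^ 2) * g q) + c * Z := by
      have j0 : Integrable (fun q : EuclideanSpace ℝ (Fin 3) => g q * Real.log c) :=
        hg_int.mul_const (Real.log c)
      have i1 : Integrable (fun q : EuclideanSpace ℝ (Fin 3) =>
          g q * Real.log (g q) - g q * Real.log c) := hg_ent.sub j0
      have i2 : Integrable (fun q : EuclideanSpace ℝ (Fin 3) =>
          g q * Real.log (g q) - g q * Real.log c + Real.sqrt (1 + ‖q‖ ^ 2) * g q) :=
        i1.add hg_mom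
      have i3 : Integrable (fun q : EuclideanSpace ℝ (Fin 3) =>
          c * Real.exp (-Real.sqrt (1 + ‖q‖ ^ 2))) := hZint.const_mul c
      rw [integral_add i2 i3, integral_add i1 hg_mom, integral_sub hg_ent j0,
        integral_mul_const, integral_const_mul]
    rw [hcomp] at hmono
    have hcZ : c * Z = M := by
      rw [hc_def]; exact div_mul_cancel₀ M hZpos.ne'
    rw [hcZ] at hmono
    -- so M * log c ≤ ent + mom
    have hkey : M * Real.log c ≤ (∫ q, g q * Real.log (g q))
        + ∫ q : EuclideanSpace ℝ (Fin 3), Real.sqrt (1 + ‖q‖ ^ 2) * g q := by linarith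
    have hlogc : Real.log c = Real.log M - Real.log Z := Real.log_div hM.ne' hZpos.ne'
    have hlogK : Real.log K = - Real.log Z := by
      rw [hK, one_div, Real.log_inv]
    have habs : Real.log Z ≤ |Real.log K| := by
      rw [hlogK, abs_neg]; exact le_abs_self _
    rw [hsplit]
    have : M * Real.log M = M * Real.log c + M * Real.log Z := by
      rw [hlogc]; ring
    calc M * Real.log M = M * Real.log c + M * Real.log Z := this
      _ ≤ ((∫ q, g q * Real.log (g q))
            + ∫ q : EuclideanSpace ℝ (Fin 3), Real.sqrt (1 + ‖q‖ ^ 2) * g q)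
          + M * |Real.log K| := by
          have : M * Real.log Z ≤ M * |Real.log K| :=
            mul_le_mul_of_nonneg_left habs hM.le
          linarith
      _ = (∫ q, g q * Real.log (g q))
          + ((∫ q : EuclideanSpace ℝ (Fin 3), Real.sqrt (1 + ‖q‖ ^ 2) * g q)
            + |Real.log K| * M) := by ring
end

section
/- The function β ↦ K₁(β)/K₂(β) is strictly increasing on (0,∞), where K_j(β) = ∫₀^∞ cosh(jr) e^{−β cosh r} dr. -/
open MeasureTheory

/-- Modified Bessel function of the second kind, integral representation. -/
noncomputable def besselK (j : ℕ) (β : ℝ) : ℝ :=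
  ∫ r in Set.Ioi (0 : ℝ), Real.cosh (j * r) * Real.exp (-β * Real.cosh r)

private lemma cosh_lower {x : ℝ} (hx : 0 ≤ x) : x ^ 2 / 8 ≤ Real.cosh x := by
  have h1 : Real.exp x / 2 ≤ Real.cosh x := by
    rw [Real.cosh_eq]
    nlinarith [Real.exp_pos (-x)]
  have h2 : Real.exp (x / 2) * Real.exp (x / 2) = Real.exp x := by
    rw [← Real.exp_add]; ring_nf
  have h3 : x / 2 + 1 ≤ Real.exp (x / 2) := Real.add_one_le_exp _
  nlinarith [Real.exp_pos (x / 2)]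

private lemma kernelIntegrable {c β : ℝ} (hc : 0 ≤ c) (hβ : 0 < β) :
    IntegrableOn (fun r => Real.cosh (c * r) * Real.exp (-β * Real.cosh r)) (Set.Ioi 0) := by
  have hg : Integrable
      (fun r : ℝ => Real.exp (2 * c ^ 2 / β) * Real.exp (-(β / 8) * (r - 4 * c / β) ^ 2)) := by
    exact ((integrable_exp_neg_mul_sq (by positivity : (0:ℝ) < β / 8)).comp_sub_right
      (4 * c / β)).const_mul _
  refine Integrable.mono' hg.restrict ?_ ?_
  · exact (Continuous.mul (Real.continuous_cosh.comp (continuous_const.mul continuous_id))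
      (Real.continuous_exp.comp (continuous_const.mul Real.continuous_cosh))).aestronglyMeasurable
  · filter_upwards [ae_restrict_mem measurableSet_Ioi] with r hr
    have hr0 : (0:ℝ) < r := hr
    rw [Real.norm_eq_abs, abs_of_nonneg (by positivity)]
    have h1 : Real.cosh (c * r) ≤ Real.exp (c * r) := by
      have : Real.exp (-(c * r)) ≤ Real.exp (c * r) :=
        Real.exp_le_exp.2 (by nlinarith)
      rw [Real.cosh_eq]; linarith
    calc Real.cosh (c * r) * Real.exp (-β * Real.cosh r)
        ≤ Real.exp (c * r) * Real.exp (-β * Real.cosh r) :=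
          mul_le_mul_of_nonneg_right h1 (Real.exp_pos _).le
      _ = Real.exp (c * r + -β * Real.cosh r) := (Real.exp_add _ _).symm
      _ ≤ Real.exp (c * r - β * (r ^ 2 / 8)) :=
          Real.exp_le_exp.2 (by nlinarith [cosh_lower hr0.le])
      _ = Real.exp (2 * c ^ 2 / β) * Real.exp (-(β / 8) * (r - 4 * c / β) ^ 2) := by
          rw [← Real.exp_add]; congr 1; field_simp; ring

private lemma besselK_pos (j : ℕ) {β : ℝ} (hβ : 0 < β) : 0 < besselK j β := by
  rw [besselK, setIntegral_pos_iff_support_of_nonneg_ae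
    (Filter.Eventually.of_forall fun r => by positivity)
    (kernelIntegrable (by positivity) hβ)]
  have hsupp : Function.support
      (fun r : ℝ => Real.cosh (j * r) * Real.exp (-β * Real.cosh r)) = Set.univ := by
    refine Set.eq_univ_iff_forall.2 fun r => ?_
    exact (by positivity : (0:ℝ) < Real.cosh (j * r) * Real.exp (-β * Real.cosh r)).ne'
  rw [hsupp, Set.univ_inter, Real.volume_Ioi]
  exact ENNReal.zero_lt_top

theorem stmt_15 : StrictMonoOn (fun β => besselK 1 β / besselK 2 β) (Set.Ioi (0 : ℝ)) := by
  intro a ha b hb hab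
  simp only [Set.mem_Ioi] at ha hb
  have h2a := besselK_pos 2 ha
  have h2b := besselK_pos 2 hb
  simp only []
  rw [div_lt_div_iff₀ h2a h2b]
  -- notation
  set F : ℝ → ℝ → ℝ → ℝ := fun c β r => Real.cosh (c * r) * Real.exp (-β * Real.cosh r) with hF
  set ρ : Measure ℝ := volume.restrict (Set.Ioi 0) with hρ
  have i1a : Integrable (F 1 a) ρ := kernelIntegrable zero_le_one ha
  have i1b : Integrable (F 1 b) ρ := kernelIntegrable zero_le_one hb
  have i2a : Integrable (F 2 a) ρ := kernelIntegrable zero_le_two ha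
  have i2b : Integrable (F 2 b) ρ := kernelIntegrable zero_le_two hb
  have e1a : besselK 1 a = ∫ r, F 1 a r ∂ρ := by simp [besselK, hF, hρ]
  have e1b : besselK 1 b = ∫ r, F 1 b r ∂ρ := by simp [besselK, hF, hρ]
  have e2a : besselK 2 a = ∫ r, F 2 a r ∂ρ := by simp [besselK, hF, hρ]
  have e2b : besselK 2 b = ∫ r, F 2 b r ∂ρ := by simp [besselK, hF, hρ]
  set G : ℝ × ℝ → ℝ := fun z => F 1 a z.1 * F 2 b z.2 - F 1 b z.1 * F 2 a z.2 with hG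
  have iG : Integrable G (ρ.prod ρ) := (i1a.mul_prod i2b).sub (i1b.mul_prod i2a)
  have hD : ∫ z, G z ∂ρ.prod ρ =
      besselK 1 a * besselK 2 b - besselK 1 b * besselK 2 a := by
    rw [hG]
    rw [integral_sub (i1a.mul_prod i2b) (i1b.mul_prod i2a), integral_prod_mul, integral_prod_mul,
      e1a, e1b, e2a, e2b]
  have hswap : ∫ z, G z.swap ∂ρ.prod ρ = ∫ z, G z ∂ρ.prod ρ := integral_prod_swap G
  set H : ℝ × ℝ → ℝ := fun z => F 1 b z.1 * F 2 a z.2 + F 2 a z.1 * F 1 b z.2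
      - F 1 a z.1 * F 2 b z.2 - F 2 b z.1 * F 1 a z.2 with hH
  have iH : Integrable H (ρ.prod ρ) :=
    (((i1b.mul_prod i2a).add (i2a.mul_prod i1b)).sub (i1a.mul_prod i2b)).sub (i2b.mul_prod i1a)
  have hHG : H = fun z => -(G z + G z.swap) := by
    funext z; simp only [hH, hG, Prod.fst_swap, Prod.snd_swap]; ring
  have hint : ∫ z, H z ∂ρ.prod ρ = -(2 * ∫ z, G z ∂ρ.prod ρ) := by
    have iGs : Integrable (fun z : ℝ × ℝ => G z.swap) (ρ.prod ρ) := iG.swap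
    rw [hHG, integral_neg, integral_add iG iGs, hswap]; ring
  have key : ∀ r s : ℝ, H (r, s) =
      (Real.cosh s - Real.cosh r) * (2 * Real.cosh r * Real.cosh s + 1) *
      (Real.exp (-b * Real.cosh r) * Real.exp (-a * Real.cosh s)
        - Real.exp (-a * Real.cosh r) * Real.exp (-b * Real.cosh s)) := by
    intro r s
    simp only [hH, hF, one_mul, Real.cosh_two_mul, Real.sinh_sq]
    ring
  have hpos : ∀ z : ℝ × ℝ, 0 ≤ H z := by
    rintro ⟨r, s⟩
    rw [key r s]
    have hcr := Real.cosh_pos (x := r)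
    have hcs := Real.cosh_pos (x := s)
    rcases le_total (Real.cosh r) (Real.cosh s) with h | h
    · have he : Real.exp (-a * Real.cosh r) * Real.exp (-b * Real.cosh s) ≤
          Real.exp (-b * Real.cosh r) * Real.exp (-a * Real.cosh s) := by
        rw [← Real.exp_add, ← Real.exp_add]
        exact Real.exp_le_exp.2 (by nlinarith)
      have := mul_nonneg (sub_nonneg.2 h) (by nlinarith : (0:ℝ) ≤ 2 * Real.cosh r * Real.cosh s + 1)
      exact mul_nonneg this (sub_nonneg.2 he)
    · have he : Real.exp (-b * Real.cosh r) * Real.exp (-a * Real.cosh s) ≤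
          Real.exp (-a * Real.cosh r) * Real.exp (-b * Real.cosh s) := by
        rw [← Real.exp_add, ← Real.exp_add]
        exact Real.exp_le_exp.2 (by nlinarith)
      have h1 : (Real.cosh s - Real.cosh r) * (2 * Real.cosh r * Real.cosh s + 1) ≤ 0 :=
        mul_nonpos_of_nonpos_of_nonneg (sub_nonpos.2 h) (by nlinarith)
      nlinarith [mul_nonneg (neg_nonneg.2 h1) (neg_nonneg.2 (sub_nonpos.2 he))]
  have hstrict : ∀ z ∈ Set.Ioo (1:ℝ) 2 ×ˢ Set.Ioo (3:ℝ) 4, 0 < H z := by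
    rintro ⟨r, s⟩ ⟨hr, hs⟩
    simp only [Set.mem_Ioo] at hr hs
    rw [key r s]
    have hcr := Real.cosh_pos (x := r)
    have hcs := Real.cosh_pos (x := s)
    have hcc : Real.cosh r < Real.cosh s := by
      rw [Real.cosh_lt_cosh, abs_of_pos (by linarith), abs_of_pos (by linarith)]
      linarith
    have he : Real.exp (-a * Real.cosh r) * Real.exp (-b * Real.cosh s) <
        Real.exp (-b * Real.cosh r) * Real.exp (-a * Real.cosh s) := by
      rw [← Real.exp_add, ← Real.exp_add]
      exact Real.exp_lt_exp.2 (by nlinarith)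
    exact mul_pos (mul_pos (sub_pos.2 hcc) (by nlinarith)) (sub_pos.2 he)
  have hHpos : 0 < ∫ z, H z ∂ρ.prod ρ := by
    have hmeq : ρ.prod ρ =
        (volume.prod volume).restrict (Set.Ioi (0:ℝ) ×ˢ Set.Ioi (0:ℝ)) := by
      rw [hρ, Measure.prod_restrict]
    rw [hmeq]
    rw [setIntegral_pos_iff_support_of_nonneg_ae
      (Filter.Eventually.of_forall hpos) (by rw [IntegrableOn, ← hmeq]; exact iH)]
    have hsub : Set.Ioo (1:ℝ) 2 ×ˢ Set.Ioo (3:ℝ) 4 ⊆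
        Function.support H ∩ Set.Ioi 0 ×ˢ Set.Ioi 0 := by
      rintro ⟨r, s⟩ hz
      refine ⟨(hstrict _ hz).ne', ?_⟩
      obtain ⟨h1, h2⟩ := hz
      simp only [Set.mem_Ioo] at h1 h2
      exact ⟨by simp only [Set.mem_Ioi]; linarith [h1.1], by simp only [Set.mem_Ioi]; linarith [h2.1]⟩
    calc (0:ENNReal) < (volume.prod volume) (Set.Ioo (1:ℝ) 2 ×ˢ Set.Ioo (3:ℝ) 4) := by
          rw [Measure.prod_prod, Real.volume_Ioo, Real.volume_Ioo]; norm_num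
      _ ≤ _ := measure_mono hsub
  have hGneg : ∫ z, G z ∂ρ.prod ρ < 0 := by linarith [hint ▸ hHpos]
  rw [hD] at hGneg
  linarith
end

section
/- Let f₁, f₂ ∈ L¹(ℝ³) be nonnegative, supported in {|q| ≤ 2R}, with proper densities nᵢ = √((∫ fᵢ dq)² − |∫ q fᵢ dq/√(1+|q|²)|²). Then |n₁ − n₂| ≤ 2√(1+4R²) ∫_{|q| ≤ 2R} |f₁ − f₂| dq. -/
/-!
Write `Aᵢ = ∫ fᵢ` and `Vᵢ = ∫ fᵢ q / q⁰`, so that `nᵢ² = Aᵢ² - |Vᵢ|²`. Since `|q / q⁰| ≤ 1`, both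
`|A₁ - A₂|` and `|V₁ - V₂|` are at most `∫ |f₁ - f₂|`, and `|Vᵢ| ≤ Aᵢ`; hence
`|n₁² - n₂²| ≤ 2 (A₁ + A₂) ∫ |f₁ - f₂|`. On `|q| ≤ r` the speed `|q| / q⁰` is at most
`r / √(1 + r²)`, which gives `|Vᵢ| ≤ r Aᵢ / √(1 + r²)` and so `Aᵢ ≤ √(1 + r²) nᵢ`.
Dividing `n₁² - n₂²` by `n₁ + n₂` gives the claim.
-/

open MeasureTheory

lemma abs_sub_le_of_sq_eq_sq_sub_sq {n₁ n₂ a₁ a₂ v₁ v₂ c d : ℝ} (hc : 0 ≤ c)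
    (hn₁ : 0 ≤ n₁) (hn₂ : 0 ≤ n₂) (hv₁ : 0 ≤ v₁) (hv₂ : 0 ≤ v₂)
    (hva₁ : v₁ ≤ a₁) (hva₂ : v₂ ≤ a₂) (hsq₁ : n₁ ^ 2 = a₁ ^ 2 - v₁ ^ 2)
    (hsq₂ : n₂ ^ 2 = a₂ ^ 2 - v₂ ^ 2) (han₁ : a₁ ≤ c * n₁) (han₂ : a₂ ≤ c * n₂)
    (hda : |a₁ - a₂| ≤ d) (hdv : |v₁ - v₂| ≤ d) :
    |n₁ - n₂| ≤ 2 * c * d := by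
  have hd : 0 ≤ d := (abs_nonneg _).trans hda
  rcases (add_nonneg hn₁ hn₂).eq_or_lt with hzero | hpos
  · rw [show n₁ = 0 by linarith, show n₂ = 0 by linarith, sub_zero, abs_zero]
    positivity
  have hfactor : (n₁ - n₂) * (n₁ + n₂) = (a₁ - a₂) * (a₁ + a₂) - (v₁ - v₂) * (v₁ + v₂) := by
    linear_combination hsq₁ - hsq₂
  refine le_of_mul_le_mul_right ?_ hpos
  calc |n₁ - n₂| * (n₁ + n₂) = |(a₁ - a₂) * (a₁ + a₂) - (v₁ - v₂) * (v₁ + v₂)| := by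
        rw [← hfactor, abs_mul, abs_of_pos hpos]
    _ ≤ |a₁ - a₂| * (a₁ + a₂) + |v₁ - v₂| * (v₁ + v₂) := by
        refine (abs_sub _ _).trans ?_
        rw [abs_mul, abs_mul, abs_of_nonneg (by linarith : 0 ≤ a₁ + a₂),
          abs_of_nonneg (by linarith : 0 ≤ v₁ + v₂)]
    _ ≤ d * (a₁ + a₂) + d * (a₁ + a₂) := by gcongr; linarith
    _ ≤ 2 * c * d * (n₁ + n₂) := by nlinarith

namespace ProperDensity

variable {E : Type*} [NormedAddCommGroup E] [NormedSpace ℝ E]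

/-- The velocity `q / q⁰` of a unit-mass particle of momentum `q`, where `q⁰ = √(1 + |q|²)`. -/
noncomputable def velocity (q : E) : E := (Real.sqrt (1 + ‖q‖ ^ 2))⁻¹ • q

lemma sqrt_one_add_sq_pos (t : ℝ) : 0 < Real.sqrt (1 + t ^ 2) :=
  Real.sqrt_pos.mpr (by positivity)

lemma norm_velocity (q : E) : ‖velocity q‖ = ‖q‖ / Real.sqrt (1 + ‖q‖ ^ 2) := by
  rw [velocity, norm_smul, norm_inv, Real.norm_of_nonneg (Real.sqrt_nonneg _), inv_mul_eq_div]

lemma div_sqrt_one_add_sq_le_one (t : ℝ) : t / Real.sqrt (1 + t ^ 2) ≤ 1 := by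
  rw [div_le_one (sqrt_one_add_sq_pos t)]
  exact (le_abs_self t).trans (Real.abs_le_sqrt (by linarith))

lemma div_sqrt_one_add_sq_le_div_sqrt_one_add_sq {s t : ℝ} (hs : 0 ≤ s) (hst : s ≤ t) :
    s / Real.sqrt (1 + s ^ 2) ≤ t / Real.sqrt (1 + t ^ 2) := by
  rw [div_le_div_iff₀ (sqrt_one_add_sq_pos s) (sqrt_one_add_sq_pos t)]
  calc s * Real.sqrt (1 + t ^ 2) = Real.sqrt (s ^ 2 * (1 + t ^ 2)) := by
        rw [Real.sqrt_mul (sq_nonneg s), Real.sqrt_sq hs]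
    _ ≤ Real.sqrt (t ^ 2 * (1 + s ^ 2)) := Real.sqrt_le_sqrt (by nlinarith)
    _ = t * Real.sqrt (1 + s ^ 2) := by
        rw [Real.sqrt_mul (sq_nonneg t), Real.sqrt_sq (hs.trans hst)]

lemma norm_velocity_le_one (q : E) : ‖velocity q‖ ≤ 1 := by
  rw [norm_velocity]; exact div_sqrt_one_add_sq_le_one _

lemma norm_velocity_le {q : E} {r : ℝ} (hq : ‖q‖ ≤ r) :
    ‖velocity q‖ ≤ r / Real.sqrt (1 + r ^ 2) := by
  rw [norm_velocity]; exact div_sqrt_one_add_sq_le_div_sqrt_one_add_sq (norm_nonneg q) hq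

lemma continuous_velocity : Continuous (velocity (E := E)) := by
  refine Continuous.smul (Continuous.inv₀ ?_ fun q => (sqrt_one_add_sq_pos ‖q‖).ne') continuous_id
  fun_prop

lemma norm_smul_velocity_le (a : ℝ) (q : E) : ‖a • velocity q‖ ≤ |a| := by
  rw [norm_smul, Real.norm_eq_abs]
  exact mul_le_of_le_one_right (abs_nonneg a) (norm_velocity_le_one q)

variable [MeasurableSpace E] [BorelSpace E] [SecondCountableTopology E] {μ : Measure E}

/-- The spatial part of the four-vector `N^μ = ∫ q^μ f dq / q⁰`; its time part is `∫ f`. -/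
noncomputable def flux (μ : Measure E) (f : E → ℝ) : E := ∫ q, f q • velocity q ∂μ

/-- The Minkowski length `√(N^μ N_μ)` of `N^μ`. -/
noncomputable def properDensity (μ : Measure E) (f : E → ℝ) : ℝ :=
  Real.sqrt ((∫ q, f q ∂μ) ^ 2 - ‖flux μ f‖ ^ 2)

lemma integrable_smul_velocity {f : E → ℝ} (hf : Integrable f μ) :
    Integrable (fun q => f q • velocity q) μ :=
  hf.mono (hf.aestronglyMeasurable.smul continuous_velocity.aestronglyMeasurable)
    (Filter.Eventually.of_forall fun q => by
      simpa only [Real.norm_eq_abs] using norm_smul_velocity_le (f q) q)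

lemma norm_flux_sub_flux_le {f₁ f₂ : E → ℝ} (hf₁ : Integrable f₁ μ) (hf₂ : Integrable f₂ μ) :
    ‖flux μ f₁ - flux μ f₂‖ ≤ ∫ q, |f₁ q - f₂ q| ∂μ := by
  rw [flux, flux, ← integral_sub (integrable_smul_velocity hf₁) (integrable_smul_velocity hf₂)]
  refine (norm_integral_le_integral_norm _).trans
    (integral_mono ((integrable_smul_velocity hf₁).sub (integrable_smul_velocity hf₂)).norm
      (hf₁.sub hf₂).abs fun q => ?_)
  simpa only [← sub_smul] using norm_smul_velocity_le (f₁ q - f₂ q) q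

lemma norm_flux_le_integral {f : E → ℝ} (hf : ∀ q, 0 ≤ f q) (hfi : Integrable f μ) :
    ‖flux μ f‖ ≤ ∫ q, f q ∂μ :=
  (norm_integral_le_integral_norm _).trans
    (integral_mono (integrable_smul_velocity hfi).norm hfi fun q => by
      simpa only [abs_of_nonneg (hf q)] using norm_smul_velocity_le (f q) q)

lemma norm_flux_le {f : E → ℝ} {r : ℝ} (hf : ∀ q, 0 ≤ f q) (hfi : Integrable f μ)
    (hsupp : ∀ q, r < ‖q‖ → f q = 0) :
    ‖flux μ f‖ ≤ r / Real.sqrt (1 + r ^ 2) * ∫ q, f q ∂μ := by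
  rw [← integral_const_mul]
  refine (norm_integral_le_integral_norm _).trans
    (integral_mono (integrable_smul_velocity hfi).norm (hfi.const_mul _) fun q => ?_)
  rcases le_or_gt ‖q‖ r with hq | hq
  · rw [norm_smul, Real.norm_of_nonneg (hf q), mul_comm]
    exact mul_le_mul_of_nonneg_right (norm_velocity_le hq) (hf q)
  · simp [hsupp q hq]

lemma integral_le_mul_properDensity {f : E → ℝ} {r : ℝ} (hf : ∀ q, 0 ≤ f q)
    (hfi : Integrable f μ) (hsupp : ∀ q, r < ‖q‖ → f q = 0) :
    ∫ q, f q ∂μ ≤ Real.sqrt (1 + r ^ 2) * properDensity μ f := by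
  set A := ∫ q, f q ∂μ
  set c := Real.sqrt (1 + r ^ 2)
  have hA : 0 ≤ A := integral_nonneg hf
  have hc : 0 < c := sqrt_one_add_sq_pos r
  have hc_sq : c ^ 2 = 1 + r ^ 2 := Real.sq_sqrt (by positivity)
  have hV : ‖flux μ f‖ ^ 2 ≤ (r / c * A) ^ 2 :=
    pow_le_pow_left₀ (norm_nonneg _) (norm_flux_le hf hfi hsupp) 2
  have hmass : (A / c) ^ 2 ≤ A ^ 2 - ‖flux μ f‖ ^ 2 := by
    have hsplit : A ^ 2 = (A / c) ^ 2 + (r / c * A) ^ 2 := by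
      field_simp
      rw [hc_sq]
    linarith
  calc A = c * (A / c) := (mul_div_cancel₀ A hc.ne').symm
    _ ≤ c * properDensity μ f :=
      mul_le_mul_of_nonneg_left (Real.le_sqrt_of_sq_le hmass) hc.le

lemma sq_properDensity {f : E → ℝ} (hf : ∀ q, 0 ≤ f q) (hfi : Integrable f μ) :
    properDensity μ f ^ 2 = (∫ q, f q ∂μ) ^ 2 - ‖flux μ f‖ ^ 2 :=
  Real.sq_sqrt (sub_nonneg.mpr
    (pow_le_pow_left₀ (norm_nonneg _) (norm_flux_le_integral hf hfi) 2))

theorem abs_properDensity_sub_le {f₁ f₂ : E → ℝ} {r : ℝ}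
    (hf₁ : ∀ q, 0 ≤ f₁ q) (hf₂ : ∀ q, 0 ≤ f₂ q) (hf₁i : Integrable f₁ μ) (hf₂i : Integrable f₂ μ)
    (hsupp₁ : ∀ q, r < ‖q‖ → f₁ q = 0) (hsupp₂ : ∀ q, r < ‖q‖ → f₂ q = 0) :
    |properDensity μ f₁ - properDensity μ f₂| ≤
      2 * Real.sqrt (1 + r ^ 2) * ∫ q, |f₁ q - f₂ q| ∂μ := by
  have hmass : |∫ q, f₁ q ∂μ - ∫ q, f₂ q ∂μ| ≤ ∫ q, |f₁ q - f₂ q| ∂μ := by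
    rw [← integral_sub hf₁i hf₂i]
    exact abs_integral_le_integral_abs
  have hflux : |‖flux μ f₁‖ - ‖flux μ f₂‖| ≤ ∫ q, |f₁ q - f₂ q| ∂μ :=
    (abs_norm_sub_norm_le _ _).trans (norm_flux_sub_flux_le hf₁i hf₂i)
  exact abs_sub_le_of_sq_eq_sq_sub_sq (sqrt_one_add_sq_pos r).le
    (Real.sqrt_nonneg _) (Real.sqrt_nonneg _) (norm_nonneg _) (norm_nonneg _)
    (norm_flux_le_integral hf₁ hf₁i) (norm_flux_le_integral hf₂ hf₂i)
    (sq_properDensity hf₁ hf₁i) (sq_properDensity hf₂ hf₂i)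
    (integral_le_mul_properDensity hf₁ hf₁i hsupp₁) (integral_le_mul_properDensity hf₂ hf₂i hsupp₂)
    hmass hflux

lemma flux_apply {ι : Type*} [Fintype ι] {μ : Measure (EuclideanSpace ℝ ι)}
    {f : EuclideanSpace ℝ ι → ℝ} (hf : Integrable f μ) (i : ι) :
    flux μ f i = ∫ q, q i * f q / Real.sqrt (1 + ‖q‖ ^ 2) ∂μ := by
  change EuclideanSpace.proj (𝕜 := ℝ) i (∫ q, f q • velocity q ∂μ) = _
  rw [← (EuclideanSpace.proj i).integral_comp_comm (integrable_smul_velocity hf)]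
  congr 1 with q
  simp only [velocity, map_smul, PiLp.proj_apply, smul_eq_mul]
  ring

lemma properDensity_euclideanSpace {ι : Type*} [Fintype ι] {μ : Measure (EuclideanSpace ℝ ι)}
    {f : EuclideanSpace ℝ ι → ℝ} (hf : Integrable f μ) :
    properDensity μ f = Real.sqrt ((∫ q, f q ∂μ) ^ 2 -
      ∑ i, (∫ q, q i * f q / Real.sqrt (1 + ‖q‖ ^ 2) ∂μ) ^ 2) := by
  simp only [properDensity, EuclideanSpace.real_norm_sq_eq, flux_apply hf]

end ProperDensity

theorem stmt_19_general (R : ℝ) (f₁ f₂ : EuclideanSpace ℝ (Fin 3) → ℝ)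
    (h₁_nonneg : ∀ q, 0 ≤ f₁ q) (h₂_nonneg : ∀ q, 0 ≤ f₂ q)
    (h₁_int : Integrable f₁) (h₂_int : Integrable f₂)
    (h₁_supp : ∀ q : EuclideanSpace ℝ (Fin 3), 2 * R < ‖q‖ → f₁ q = 0)
    (h₂_supp : ∀ q : EuclideanSpace ℝ (Fin 3), 2 * R < ‖q‖ → f₂ q = 0)
    (n₁ n₂ : ℝ)
    (hn₁ : n₁ = Real.sqrt ((∫ q, f₁ q) ^ 2 -
      ∑ i : Fin 3, (∫ q : EuclideanSpace ℝ (Fin 3), q i * f₁ q / Real.sqrt (1 + ‖q‖ ^ 2)) ^ 2))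
    (hn₂ : n₂ = Real.sqrt ((∫ q, f₂ q) ^ 2 -
      ∑ i : Fin 3, (∫ q : EuclideanSpace ℝ (Fin 3), q i * f₂ q / Real.sqrt (1 + ‖q‖ ^ 2)) ^ 2)) :
    |n₁ - n₂| ≤ 2 * Real.sqrt (1 + 4 * R ^ 2)
      * ∫ q in {q : EuclideanSpace ℝ (Fin 3) | ‖q‖ ≤ 2 * R}, |f₁ q - f₂ q| := by
  have hball : ∫ q in {q : EuclideanSpace ℝ (Fin 3) | ‖q‖ ≤ 2 * R}, |f₁ q - f₂ q| =
      ∫ q, |f₁ q - f₂ q| :=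
    setIntegral_eq_integral_of_forall_compl_eq_zero fun q hq => by
      have hq : 2 * R < ‖q‖ := lt_of_not_ge hq
      rw [h₁_supp q hq, h₂_supp q hq, sub_self, abs_zero]
  rw [hn₁, hn₂, ← ProperDensity.properDensity_euclideanSpace h₁_int, ← ProperDensity.properDensity_euclideanSpace h₂_int,
    hball, show 4 * R ^ 2 = (2 * R) ^ 2 by ring]
  exact ProperDensity.abs_properDensity_sub_le h₁_nonneg h₂_nonneg h₁_int h₂_int h₁_supp h₂_supp

theorem stmt_19 (R : ℝ) (hR : 0 < R) (f₁ f₂ : EuclideanSpace ℝ (Fin 3) → ℝ)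
    (h₁_nonneg : ∀ q, 0 ≤ f₁ q) (h₂_nonneg : ∀ q, 0 ≤ f₂ q)
    (h₁_int : Integrable f₁) (h₂_int : Integrable f₂)
    (h₁_supp : ∀ q : EuclideanSpace ℝ (Fin 3), 2 * R < ‖q‖ → f₁ q = 0)
    (h₂_supp : ∀ q : EuclideanSpace ℝ (Fin 3), 2 * R < ‖q‖ → f₂ q = 0)
    (n₁ n₂ : ℝ)
    (hn₁ : n₁ = Real.sqrt ((∫ q, f₁ q) ^ 2 -
      ∑ i : Fin 3, (∫ q : EuclideanSpace ℝ (Fin 3), q i * f₁ q / Real.sqrt (1 + ‖q‖ ^ 2)) ^ 2))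
    (hn₂ : n₂ = Real.sqrt ((∫ q, f₂ q) ^ 2 -
      ∑ i : Fin 3, (∫ q : EuclideanSpace ℝ (Fin 3), q i * f₂ q / Real.sqrt (1 + ‖q‖ ^ 2)) ^ 2)) :
    |n₁ - n₂| ≤ 2 * Real.sqrt (1 + 4 * R ^ 2)
      * ∫ q in {q : EuclideanSpace ℝ (Fin 3) | ‖q‖ ≤ 2 * R}, |f₁ q - f₂ q| :=
  stmt_19_general R f₁ f₂ h₁_nonneg h₂_nonneg h₁_int h₂_int h₁_supp h₂_supp n₁ n₂ hn₁ hn₂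
end
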